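/- Let K be a number field, p an odd prime, and let (a, b, c) ∈ O_K³ with abc ≠ 0, a^p + b^p = c², and aO_K + bO_K + cO_K = O_K. Let E be the Weierstrass curve Y² = X³ + 4cX² + 4a^p X, with Δ_E = 2^{12}(a²b)^p and c₄ = 2^6(a^p + 4b^p). Then for every prime ideal q of O_K with q ∤ 2, one has v_q(Δ_E) = p·v_q(a²b), so p | v_q(Δ_E); and if moreover q | ab, then v_q(c₄) = 0. -/

import Mathlib

open NumberField IsDedekindDomain

open scoped Classical in
/-- The additive `P`-adic valuation on a number field `K`, normalized so that
`vP P x` is the exponent of `P` in the factorization of `x`, with `vP P 0 = 0`. -/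
noncomputable def vP {K : Type} [Field K] [NumberField K]
    (P : HeightOneSpectrum (𝓞 K)) (x : K) : ℤ :=
  if hx : x = 0 then 0
  else - Multiplicative.toAdd (WithZero.unzero ((P.valuation K).ne_zero_iff.mpr hx))

/-!
The invariants are explicit: `Δ_E = 2¹² (a²b)ᵖ` and `c₄ = 2⁶ (aᵖ + 4bᵖ)`. Away from `2` the
power of `2` is a unit, which gives the claim on `Δ_E`. If `q ∣ ab`, then `aᵖ + bᵖ = c²` and
coprimality force `q` to divide exactly one of `a`, `b`, so `q` cannot divide `aᵖ + 4bᵖ`.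
-/

namespace WeierstrassCurve

variable {R : Type*} [CommRing R] {A B C : R}

theorem Δ_of_add_eq_sq (h : A + B = C ^ 2) :
    ({ a₁ := 0, a₂ := 4 * C, a₃ := 0, a₄ := 4 * A, a₆ := 0 } : WeierstrassCurve R).Δ =
      2 ^ 12 * A ^ 2 * B := by
  simp only [Δ, b₂, b₄, b₆, b₈]
  linear_combination (-4096 : R) * A ^ 2 * h

theorem c₄_of_add_eq_sq (h : A + B = C ^ 2) :
    ({ a₁ := 0, a₂ := 4 * C, a₃ := 0, a₄ := 4 * A, a₆ := 0 } : WeierstrassCurve R).c₄ =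
      2 ^ 6 * (A + 4 * B) := by
  simp only [c₄, b₂, b₄]
  linear_combination (-256 : R) * h

end WeierstrassCurve

namespace Ideal

variable {R : Type*} [CommRing R] {q : Ideal R} [hq : q.IsPrime] {p : ℕ} {a b c : R}

theorem notMem_of_mem_of_pow_add_pow_eq_sq (hp : p ≠ 0) (hsol : a ^ p + b ^ p = c ^ 2)
    (hcoprime : span {a} ⊔ span {b} ⊔ span {c} = ⊤) (ha : a ∈ q) : b ∉ q := by
  intro hb
  have hc : c ∈ q := hq.mem_of_pow_mem 2 <| hsol ▸
    q.add_mem (q.pow_mem_of_mem ha p hp.bot_lt) (q.pow_mem_of_mem hb p hp.bot_lt)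
  refine hq.ne_top (top_le_iff.mp ?_)
  rw [← hcoprime]
  simp only [sup_le_iff, span_singleton_le_iff_mem]
  exact ⟨⟨ha, hb⟩, hc⟩

theorem pow_add_four_mul_pow_notMem (hp : p ≠ 0) (h2 : (2 : R) ∉ q) (hab : a * b ∈ q)
    (hexcl : a ∈ q → b ∉ q) : a ^ p + 4 * b ^ p ∉ q := by
  intro h
  rcases hq.mem_or_mem hab with ha | hb
  · have h4b : 4 * b ^ p ∈ q := by
      simpa using q.sub_mem h (q.pow_mem_of_mem ha p hp.bot_lt)
    have h4 : (4 : R) ∉ q := by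
      rw [show (4 : R) = 2 * 2 by norm_num]
      exact hq.mul_notMem h2 h2
    exact hq.mul_notMem h4 (fun hbp => hexcl ha (hq.mem_of_pow_mem p hbp)) h4b
  · have hap : a ^ p ∈ q := by
      simpa using q.sub_mem h (q.mul_mem_left 4 (q.pow_mem_of_mem hb p hp.bot_lt))
    exact hexcl (hq.mem_of_pow_mem p hap) hb

end Ideal

section vP

variable {K : Type} [Field K] [NumberField K] (P : HeightOneSpectrum (𝓞 K))

theorem vP_eq_neg_log (x : K) : vP P x = -WithZero.log (P.valuation K x) := by
  by_cases hx : x = 0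
  · simp [vP, hx]
  · rw [vP, dif_neg hx, WithZero.toAdd_unzero_eq_log]

theorem vP_pow (x : K) (n : ℕ) : vP P (x ^ n) = n * vP P x := by
  simp [vP_eq_neg_log]

theorem vP_algebraMap_of_notMem {u : 𝓞 K} (hu : u ∉ P.asIdeal) :
    vP P (algebraMap (𝓞 K) K u) = 0 := by
  rw [vP_eq_neg_log, P.valuation_eq_one_iff_notMem.mpr hu, WithZero.log_one, neg_zero]

theorem vP_algebraMap_mul_of_notMem {u : 𝓞 K} (hu : u ∉ P.asIdeal) (x : K) :
    vP P (algebraMap (𝓞 K) K u * x) = vP P x := by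
  rw [vP_eq_neg_log, map_mul, P.valuation_eq_one_iff_notMem.mpr hu, one_mul, vP_eq_neg_log]

end vP

theorem frey_curve_pp2_valuation_at_odd_primes_general
    (K : Type) [Field K] [NumberField K]
    (p : ℕ) (hp : p.Prime) (a b c : 𝓞 K)
    (hsol : a ^ p + b ^ p = c ^ 2)
    (hcoprime : Ideal.span {a} ⊔ Ideal.span {b} ⊔ Ideal.span {c} = ⊤)
    (W : WeierstrassCurve (𝓞 K))
    (hW : W = { a₁ := 0, a₂ := 4 * c, a₃ := 0, a₄ := 4 * a ^ p, a₆ := 0 }) :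
    ∀ q : HeightOneSpectrum (𝓞 K), (2 : 𝓞 K) ∉ q.asIdeal →
      vP q (algebraMap (𝓞 K) K W.Δ) = p * vP q (algebraMap (𝓞 K) K (a ^ 2 * b)) ∧
      (p : ℤ) ∣ vP q (algebraMap (𝓞 K) K W.Δ) ∧
      (a * b ∈ q.asIdeal → vP q (algebraMap (𝓞 K) K W.c₄) = 0) := by
  intro q h2
  have h2pow (n : ℕ) (hn : n ≠ 0) : (2 : 𝓞 K) ^ n ∉ q.asIdeal :=
    fun h => h2 (q.isPrime.mem_of_pow_mem n h)
  have hΔ : vP q (algebraMap (𝓞 K) K W.Δ) = p * vP q (algebraMap (𝓞 K) K (a ^ 2 * b)) := by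
    rw [hW, WeierstrassCurve.Δ_of_add_eq_sq hsol,
      show (2 : 𝓞 K) ^ 12 * (a ^ p) ^ 2 * b ^ p = 2 ^ 12 * (a ^ 2 * b) ^ p by ring, map_mul,
      vP_algebraMap_mul_of_notMem q (h2pow 12 (by norm_num)), map_pow, vP_pow]
  refine ⟨hΔ, ⟨_, hΔ⟩, fun hab => vP_algebraMap_of_notMem q ?_⟩
  rw [hW, WeierstrassCurve.c₄_of_add_eq_sq hsol]
  exact q.isPrime.mul_notMem (h2pow 6 (by norm_num)) <|
    Ideal.pow_add_four_mul_pow_notMem hp.ne_zero h2 hab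
      (Ideal.notMem_of_mem_of_pow_add_pow_eq_sq hp.ne_zero hsol hcoprime)

/-- **Reduction data of the Frey curve `Y² = X³ + 4cX² + 4aᵖX` at odd primes**. Let
`(a,b,c) ∈ O_K³` with `abc ≠ 0`, `aᵖ + bᵖ = c²` and `aO_K + bO_K + cO_K = O_K`. Then for
every prime ideal `q ∤ 2`, `v_q(Δ_E) = p·v_q(a²b)`, so `p ∣ v_q(Δ_E)`; and if `q ∣ ab`
then `v_q(c₄) = 0`. -/
theorem frey_curve_pp2_valuation_at_odd_primes
    (K : Type) [Field K] [NumberField K]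
    (p : ℕ) (hp : p.Prime) (hp2 : p ≠ 2) (a b c : 𝓞 K)
    (habc : a * b * c ≠ 0)
    (hsol : a ^ p + b ^ p = c ^ 2)
    (hcoprime : Ideal.span {a} ⊔ Ideal.span {b} ⊔ Ideal.span {c} = ⊤)
    (W : WeierstrassCurve (𝓞 K))
    (hW : W = { a₁ := 0, a₂ := 4 * c, a₃ := 0, a₄ := 4 * a ^ p, a₆ := 0 }) :
    ∀ q : HeightOneSpectrum (𝓞 K), (2 : 𝓞 K) ∉ q.asIdeal →
      vP q (algebraMap (𝓞 K) K W.Δ) = p * vP q (algebraMap (𝓞 K) K (a ^ 2 * b)) ∧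
      (p : ℤ) ∣ vP q (algebraMap (𝓞 K) K W.Δ) ∧
      (a * b ∈ q.asIdeal → vP q (algebraMap (𝓞 K) K W.c₄) = 0) :=
  frey_curve_pp2_valuation_at_odd_primes_general K p hp a b c hsol hcoprime W hW
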